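/- Let k ≥ 2 be odd, let G_k be a 3-regular bipartite graph on 2k vertices with bipartition into independent sets A and B of size k, and let H_k be as constructed. If G_k has no Hamiltonian cycle, then every σ ∈ Res(G_k, H_k) satisfies MMC(σ) ≥ 4, where MMC(σ) is the maximum degree of a vertex of the mismatch graph G_k^σ − H_k. -/

import Mathlib

open SimpleGraph

section MismatchDefs

variable {V W : Type*}

/-- The mismatch graph `G^π − H`: the symmetric difference of the image of `G` under the
bijection `π` with `H`, as a graph on `V(H)`. Its edges are the positive edges
(edges of `G^π` not in `H`) together with the negative edges (edges of `H` not in `G^π`). -/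
def mismatchGraph (G : SimpleGraph V) (H : SimpleGraph W) (π : V ≃ W) : SimpleGraph W :=
  symmDiff (G.map π.toEmbedding) H

/-- The degree of a vertex in the mismatch graph `G^π − H`. -/
noncomputable def mismatchDeg (G : SimpleGraph V) (H : SimpleGraph W) (π : V ≃ W) (x : W) : ℕ :=
  ((mismatchGraph G H π).neighborSet x).ncard

/-- The number of positive edges of `G^π − H` incident to `x`. -/
noncomputable def posDeg (G : SimpleGraph V) (H : SimpleGraph W) (π : V ≃ W) (x : W) : ℕ :=
  ((G.map π.toEmbedding).neighborSet x \ H.neighborSet x).ncard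

/-- The number of negative edges of `G^π − H` incident to `x`. -/
noncomputable def negDeg (G : SimpleGraph V) (H : SimpleGraph W) (π : V ≃ W) (x : W) : ℕ :=
  (H.neighborSet x \ (G.map π.toEmbedding).neighborSet x).ncard

/-- The maximum mismatch count `MMC(π)`: the maximum degree of the mismatch graph `G^π − H`. -/
noncomputable def MMC [Fintype W] (G : SimpleGraph V) (H : SimpleGraph W) (π : V ≃ W) : ℕ :=
  Finset.univ.sup (mismatchDeg G H π)

/-- The edit mismatch norm `μ_edit(G^π, H)`: the number of edges of the mismatch graph. -/
noncomputable def muEdit (G : SimpleGraph V) (H : SimpleGraph W) (π : V ≃ W) : ℕ :=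
  (mismatchGraph G H π).edgeSet.ncard

/-- The edit distance `δ_edit(G, H)`: the minimum of `μ_edit(G^π, H)` over all bijections. -/
noncomputable def deltaEdit (G : SimpleGraph V) (H : SimpleGraph W) : ℕ :=
  ⨅ π : V ≃ W, muEdit G H π

open Classical in
/-- The signed adjacency matrix of the mismatch graph `G^π − H`:
`+1` on positive edges, `−1` on negative edges, `0` otherwise. -/
noncomputable def signedAdj (G : SimpleGraph V) (H : SimpleGraph W) (π : V ≃ W) :
    Matrix W W ℝ := fun x y =>
  if (G.map π.toEmbedding).Adj x y ∧ ¬ H.Adj x y then 1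
  else if H.Adj x y ∧ ¬ (G.map π.toEmbedding).Adj x y then -1 else 0

/-- The `ℓ_p` norm of a vector over a finite index type. -/
noncomputable def lpNorm [Fintype W] (p : ℝ) (x : W → ℝ) : ℝ :=
  (∑ i, |x i| ^ p) ^ p⁻¹

/-- The `ℓ_p`-operator norm of a matrix: `sup_{x ≠ 0} ‖Mx‖_p / ‖x‖_p`. -/
noncomputable def lpOpNorm [Fintype W] (p : ℝ) (M : Matrix W W ℝ) : ℝ :=
  ⨆ x : {x : W → ℝ // x ≠ 0}, lpNorm p (M.mulVec x.1) / lpNorm p x.1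

end MismatchDefs

/-- The graph `H_k` on vertex set `{0, 1, …, 2k−1}`: the Hamiltonian cycle
`0 − 1 − ⋯ − (2k−1) − 0` together with, for even `k`, the chords `{i, i+2}` for
`i ≡ 0, 1 (mod 4)`, and for odd `k`, the chords `{i, i−2}` for `i ≡ 2 (mod 4)`,
`{i, i+2}` for `i ≡ 3 (mod 4)`, and `{2k−2, 1}`. -/
def Hk (k : ℕ) : SimpleGraph (Fin (2 * k)) :=
  SimpleGraph.fromRel (fun a b =>
    (b.val = a.val + 1) ∨ (a.val = 2 * k - 1 ∧ b.val = 0) ∨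
    (if k % 2 = 0 then
      (a.val % 4 = 0 ∨ a.val % 4 = 1) ∧ b.val = a.val + 2
    else
      (a.val % 4 = 2 ∧ b.val = a.val - 2) ∨ (a.val % 4 = 3 ∧ b.val = a.val + 2) ∨
        (a.val = 2 * k - 2 ∧ b.val = 1)))

/-- Attach `5` new pendant leaves to every vertex satisfying `P` and `12` new pendant
leaves to every other vertex. The leaves of `v` are `Sum.inr ⟨v, i⟩`. -/
def hatGraph {V : Type*} (G : SimpleGraph V) (P : V → Prop) [DecidablePred P] :
    SimpleGraph (V ⊕ Σ v : V, Fin (if P v then 5 else 12)) :=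
  SimpleGraph.fromRel (fun a b =>
    match a, b with
    | Sum.inl u, Sum.inl v => G.Adj u v
    | Sum.inl u, Sum.inr x => u = x.1
    | _, _ => False)

/-- `σ ∈ Res(G_k, H_k)`: the bijection `σ` maps the independent set `A` onto the even
vertices `Even(2k)` (and hence its complement `B` onto the odd vertices `Odd(2k)`). -/
def InRes {V : Type*} (k : ℕ) (A : Finset V) (σ : V ≃ Fin (2 * k)) : Prop :=
  ∀ v, v ∈ A ↔ (σ v).val % 2 = 0

/-! Suppose `MMC(σ) ≤ 3`. Since `σ` sends the bipartition classes to the two parity classes,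
the image `G^σ` of `G` only has edges between vertices of different parity, and it is
3-regular. Every vertex `x ∉ {1, 2k−2}` of `H_k` has a chord to a vertex of its own parity,
which is therefore missing from `G^σ`, and its only neighbours of the other parity are
`x ± 1`. If one of `x ± 1` were also missing from `G^σ`, then `x` would lose two edges of
`H_k` and keep at most one, so gain at least two, and have mismatch degree at least `4`.
Hence `G^σ` contains every cycle edge at such `x`; the edges at `1` and `2k−2` are also edges
at their successors `2` and `2k−1`. So `G^σ`, and with it `G`, is Hamiltonian. -/

namespace SimpleGraph

variable {V W : Type*}

theorem Iso.isHamiltonian [Fintype V] [Fintype W] [DecidableEq V] [DecidableEq W]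
    {G : SimpleGraph V} {G' : SimpleGraph W} (e : G ≃g G') (hG : G.IsHamiltonian) :
    G'.IsHamiltonian := fun _ ↦
  let ⟨a, p, hp⟩ := hG (by rwa [Fintype.card_congr e.toEquiv])
  ⟨e a, p.map e.toHom, hp.map e.bijective⟩

theorem cycleGraph_isHamiltonian (n : ℕ) : (cycleGraph (n + 3)).IsHamiltonian := fun _ ↦
  ⟨0, cycleGraph.cycle n, Walk.isHamiltonianCycle_iff_isCycle_and_length_eq.2
    ⟨cycleGraph.isCycle_cycle, by simp [cycleGraph.length_cycle]⟩⟩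

theorem isHamiltonian_of_forall_adj_add_one {n : ℕ} [NeZero n] (hn : 3 ≤ n)
    {Γ : SimpleGraph (Fin n)} (h : ∀ x, Γ.Adj x (x + 1)) : Γ.IsHamiltonian := by
  obtain ⟨m, rfl⟩ : ∃ m, n = m + 3 := ⟨n - 3, by omega⟩
  refine (cycleGraph_isHamiltonian m).mono fun a b hab ↦ ?_
  rcases (cycleGraph_adj (n := m + 1)).1 hab with hab | hab
  · simpa [sub_eq_iff_eq_add'.1 hab] using (h b).symm
  · simpa [sub_eq_iff_eq_add'.1 hab] using h a

theorem ncard_neighborSet_map_equiv [Fintype V] (G : SimpleGraph V) [DecidableRel G.Adj]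
    (π : V ≃ W) (x : W) :
    ((G.map π.toEmbedding).neighborSet x).ncard = G.degree (π.symm x) := by
  obtain ⟨v, rfl⟩ := π.surjective x
  rw [← Equiv.coe_toEmbedding, neighborSet_map,
    Set.ncard_image_of_injective _ π.toEmbedding.injective, Equiv.coe_toEmbedding,
    π.symm_apply_apply, ← card_neighborSet_eq_degree, Set.ncard_eq_toFinset_card',
    Set.toFinset_card]

end SimpleGraph

section Mismatch

open SimpleGraph

variable {V W : Type*} {G : SimpleGraph V} {H : SimpleGraph W} {π : V ≃ W}

theorem mismatchDeg_eq_posDeg_add_negDeg [Finite W] (x : W) :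
    mismatchDeg G H π x = posDeg G H π x + negDeg G H π x := by
  rw [mismatchDeg, posDeg, negDeg, ← Set.ncard_union_eq disjoint_sdiff_sdiff]
  rfl

theorem map_adj_of_mismatchDeg_le [Finite W] {x y z c : W} {d : ℕ}
    (hd : ((G.map π.toEmbedding).neighborSet x).ncard = d)
    (hcommon : (G.map π.toEmbedding).neighborSet x ∩ H.neighborSet x ⊆ {y, z})
    (hy : H.Adj x y) (hc : H.Adj x c) (hcG : ¬ (G.map π.toEmbedding).Adj x c) (hyc : y ≠ c)
    (hdeg : mismatchDeg G H π x ≤ d) : (G.map π.toEmbedding).Adj x y := by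
  by_contra hyG
  -- `x` loses `y` and `c` and keeps at most `z`, so it gains at least `d - 1` edges.
  have hpos : d ≤ posDeg G H π x + 1 := by
    have hz : (G.map π.toEmbedding).neighborSet x ∩ H.neighborSet x ⊆ {z} := fun w hw ↦ by
      rcases hcommon hw with rfl | hwz
      · exact absurd hw.1 hyG
      · exact hwz
    rw [← hd, ← Set.ncard_inter_add_ncard_sdiff_eq_ncard, posDeg, add_comm]
    grw [Set.ncard_le_ncard hz, Set.ncard_singleton]
  have hneg : 2 ≤ negDeg G H π x := by
    rw [← Set.ncard_pair hyc]
    exact Set.ncard_le_ncard (Set.pair_subset ⟨hy, hyG⟩ ⟨hc, hcG⟩)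
  have := mismatchDeg_eq_posDeg_add_negDeg (G := G) (H := H) (π := π) x
  omega

end Mismatch

theorem Fin.val_add_one_eq_ite {n : ℕ} [NeZero n] (x : Fin n) :
    (x + 1).val = if x.val + 1 = n then 0 else x.val + 1 := by
  rw [Fin.val_add, Fin.val_one']
  have := x.isLt
  split_ifs with h
  · rcases Nat.lt_or_ge 1 n with hn | hn
    · rw [Nat.mod_eq_of_lt hn, h, Nat.mod_self]
    · obtain rfl : n = 1 := by omega
      simp
  · rw [Nat.mod_eq_of_lt (by omega : 1 < n), Nat.mod_eq_of_lt (by omega)]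

section Hk

variable {k : ℕ}

theorem Hk_adj_add_one [NeZero (2 * k)] (x : Fin (2 * k)) : (Hk k).Adj x (x + 1) := by
  have := Fin.val_add_one_eq_ite x
  have := NeZero.ne (2 * k)
  simp only [Hk, fromRel_adj, ne_eq, Fin.ext_iff]
  split_ifs at * <;> omega

theorem exists_Hk_adj_val_mod_two_eq (hk : Odd k) {x : Fin (2 * k)} (h₁ : x.val ≠ 1)
    (h₂ : x.val ≠ 2 * k - 2) :
    ∃ c : Fin (2 * k), (Hk k).Adj x c ∧ c.val % 2 = x.val % 2 := by
  have hk' := Nat.odd_iff.1 hk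
  have := x.isLt
  -- The chords `{i - 2, i}` (`i ≡ 2 mod 4`) and `{i, i + 2}` (`i ≡ 3 mod 4`) pair up the
  -- residues `0 ↔ 2` and `3 ↔ 1` mod 4; only the partners `-1` of `1` and `2k` of
  -- `2k - 2 ≡ 0 mod 4` do not exist.
  refine ⟨⟨if x.val % 4 = 0 ∨ x.val % 4 = 3 then x.val + 2 else x.val - 2,
    by split_ifs <;> omega⟩, ?_, by dsimp only; split_ifs <;> omega⟩
  simp only [Hk, fromRel_adj, ne_eq, Fin.ext_iff, if_neg (by omega : ¬ k % 2 = 0)]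
  split_ifs <;> omega

theorem Hk_adj_of_val_mod_two_ne [NeZero (2 * k)] (hk : Odd k) {x y : Fin (2 * k)}
    (h₁ : x.val ≠ 1) (h₂ : x.val ≠ 2 * k - 2) (hxy : (Hk k).Adj x y)
    (hpar : x.val % 2 ≠ y.val % 2) : y = x + 1 ∨ y = x - 1 := by
  have hk' := Nat.odd_iff.1 hk
  rw [eq_sub_iff_add_eq, Fin.ext_iff, Fin.ext_iff, Fin.val_add_one_eq_ite,
    Fin.val_add_one_eq_ite]
  simp only [Hk, fromRel_adj, ne_eq, Fin.ext_iff, if_neg (by omega : ¬ k % 2 = 0)] at hxy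
  have := x.isLt
  have := y.isLt
  split_ifs <;> omega

theorem val_add_one_mod_two_ne [NeZero (2 * k)] (x : Fin (2 * k)) :
    (x + 1).val % 2 ≠ x.val % 2 := by
  rw [Fin.val_add_one_eq_ite]
  split_ifs <;> omega

end Hk

theorem InRes.val_mod_two_ne_of_adj {V : Type*} {G : SimpleGraph V} {k : ℕ}
    {π : V ≃ Fin (2 * k)} {A B : Finset V} (hπ : InRes k A π)
    (hUnion : ∀ v, v ∈ A ∨ v ∈ B) (hAind : ∀ u ∈ A, ∀ v ∈ A, ¬ G.Adj u v)
    (hBind : ∀ u ∈ B, ∀ v ∈ B, ¬ G.Adj u v) (u v : V) (huv : G.Adj u v) :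
    (π u).val % 2 ≠ (π v).val % 2 := by
  intro h
  rcases Nat.mod_two_eq_zero_or_one (π u).val with hu | hu
  · exact hAind u ((hπ u).2 hu) v ((hπ v).2 (h ▸ hu)) huv
  · have hnot : ∀ w, (π w).val % 2 = 1 → w ∈ B := fun w hw ↦
      (hUnion w).resolve_left fun hA ↦ by have := (hπ w).1 hA; omega
    exact hBind u (hnot u hu) v (hnot v (h ▸ hu)) huv

section Res

variable {V : Type*} [Fintype V] {G : SimpleGraph V} [DecidableRel G.Adj] {k : ℕ}
  [NeZero (2 * k)] {π : V ≃ Fin (2 * k)}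

theorem map_adj_add_one_and_sub_one_of_mismatchDeg_le (hk : Odd k)
    (hreg : G.IsRegularOfDegree 3) (hpar : ∀ u v, G.Adj u v → (π u).val % 2 ≠ (π v).val % 2)
    {x : Fin (2 * k)}
    (h₁ : x.val ≠ 1) (h₂ : x.val ≠ 2 * k - 2) (hdeg : mismatchDeg G (Hk k) π x ≤ 3) :
    (G.map π.toEmbedding).Adj x (x + 1) ∧ (G.map π.toEmbedding).Adj x (x - 1) := by
  have hpar' : ∀ y, (G.map π.toEmbedding).Adj x y → x.val % 2 ≠ y.val % 2 := by
    rintro y ⟨-, u, v, huv, rfl, rfl⟩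
    exact hpar u v huv
  have hd : ((G.map π.toEmbedding).neighborSet x).ncard = 3 :=
    (ncard_neighborSet_map_equiv G π x).trans (hreg _)
  have hcommon : (G.map π.toEmbedding).neighborSet x ∩ (Hk k).neighborSet x ⊆ {x + 1, x - 1} :=
    fun y hy ↦ Hk_adj_of_val_mod_two_ne hk h₁ h₂ hy.2 (hpar' y hy.1)
  obtain ⟨c, hc, hcx⟩ := exists_Hk_adj_val_mod_two_eq hk h₁ h₂
  have hcG : ¬ (G.map π.toEmbedding).Adj x c := fun h ↦ hpar' c h hcx.symm
  have hsucc_par := val_add_one_mod_two_ne x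
  have hpred_par := val_add_one_mod_two_ne (x - 1)
  rw [sub_add_cancel] at hpred_par
  have hpred_adj := (Hk_adj_add_one (x - 1)).symm
  rw [sub_add_cancel] at hpred_adj
  exact ⟨map_adj_of_mismatchDeg_le hd hcommon (Hk_adj_add_one x) hc hcG
      (by rintro rfl; omega) hdeg,
    map_adj_of_mismatchDeg_le hd (Set.pair_comm (x + 1) (x - 1) ▸ hcommon) hpred_adj hc hcG
      (by rintro rfl; omega) hdeg⟩

theorem map_adj_add_one_of_mismatchDeg_le (hk : Odd k) (hk₂ : 2 ≤ k)
    (hreg : G.IsRegularOfDegree 3) (hpar : ∀ u v, G.Adj u v → (π u).val % 2 ≠ (π v).val % 2)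
    (hdeg : ∀ x, mismatchDeg G (Hk k) π x ≤ 3) (x : Fin (2 * k)) :
    (G.map π.toEmbedding).Adj x (x + 1) := by
  by_cases hx : x.val ≠ 1 ∧ x.val ≠ 2 * k - 2
  · exact (map_adj_add_one_and_sub_one_of_mismatchDeg_le hk hreg hpar hx.1 hx.2 (hdeg x)).1
  · -- `x ∈ {1, 2k - 2}`, and its successor `x + 1 ∈ {2, 2k - 1}` is not exceptional.
    have hk₃ : 3 ≤ k := by have := Nat.odd_iff.1 hk; omega
    have hx' := Fin.val_add_one_eq_ite x
    have h₁ : (x + 1).val ≠ 1 := by split_ifs at hx' <;> omega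
    have h₂ : (x + 1).val ≠ 2 * k - 2 := by split_ifs at hx' <;> omega
    have hpred := (map_adj_add_one_and_sub_one_of_mismatchDeg_le hk hreg hpar h₁ h₂ (hdeg _)).2
    rw [add_sub_cancel_right] at hpred
    exact hpred.symm

end Res

theorem statement_9_general {V : Type*} [Fintype V] [DecidableEq V] (k : ℕ) (hk : 2 ≤ k)
    (hkpar : Odd k)
    (G : SimpleGraph V) [DecidableRel G.Adj] (A B : Finset V)
    (hUnion : ∀ v, v ∈ A ∨ v ∈ B)
    (hreg : G.IsRegularOfDegree 3)
    (hAind : ∀ u ∈ A, ∀ v ∈ A, ¬ G.Adj u v) (hBind : ∀ u ∈ B, ∀ v ∈ B, ¬ G.Adj u v)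
    (hHam : ¬ G.IsHamiltonian) :
    ∀ σ : V ≃ Fin (2 * k), InRes k A σ → 4 ≤ MMC G (Hk k) σ := by
  intro σ hσ
  by_contra! hlt
  have : NeZero (2 * k) := ⟨by omega⟩
  have hdeg (x : Fin (2 * k)) : mismatchDeg G (Hk k) σ x ≤ 3 :=
    Nat.le_of_lt_succ ((Finset.le_sup (Finset.mem_univ x)).trans_lt hlt)
  have hpar := hσ.val_mod_two_ne_of_adj hUnion hAind hBind
  refine hHam ((Iso.map σ G).symm.isHamiltonian ?_)
  exact isHamiltonian_of_forall_adj_add_one (by omega)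
    (map_adj_add_one_of_mismatchDeg_le hkpar hk hreg hpar hdeg)

/-- Let `k ≥ 2` be odd, and let `G` be a 3-regular bipartite graph on
`2k` vertices with bipartition into independent sets `A`, `B` of size `k`. If `G` has no
Hamiltonian cycle, then every `σ ∈ Res(G, H_k)` satisfies `MMC(σ) ≥ 4`. -/
theorem statement_9 {V : Type*} [Fintype V] [DecidableEq V] (k : ℕ) (hk : 2 ≤ k)
    (hkpar : Odd k)
    (G : SimpleGraph V) [DecidableRel G.Adj] (A B : Finset V)
    (hcard : Fintype.card V = 2 * k) (hA : A.card = k) (hB : B.card = k)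
    (hUnion : ∀ v, v ∈ A ∨ v ∈ B) (hDisj : Disjoint A B)
    (hreg : G.IsRegularOfDegree 3)
    (hAind : ∀ u ∈ A, ∀ v ∈ A, ¬ G.Adj u v) (hBind : ∀ u ∈ B, ∀ v ∈ B, ¬ G.Adj u v)
    (hHam : ¬ G.IsHamiltonian) :
    ∀ σ : V ≃ Fin (2 * k), InRes k A σ → 4 ≤ MMC G (Hk k) σ :=
  statement_9_general k hk hkpar G A B hUnion hreg hAind hBind hHam
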